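/- Let γ : I → ℝ^d be an (H,α)-Hölder and (α,η)-tight curve. Fix ε > 0 and ω ∈ Ω, and let A be the set of all t ∈ I such that γ has ε-gaps of arbitrarily small scales at t. Then H^1(A ∩ γ^{−1}(E(ω))) = 0 and H^{1/α}(γ(A) ∩ E(ω)) = 0. -/

import Mathlib

open MeasureTheory Set
open scoped ENNReal NNReal

noncomputable section

namespace FracPerc

/-- Euclidean space `ℝ^d`. -/
abbrev Euc (d : ℕ) := EuclideanSpace ℝ (Fin d)

/-- View a coordinate function as a point of `ℝ^d`. -/
def ptOf (d : ℕ) (f : Fin d → ℝ) : Euc d := WithLp.toLp 2 f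

/-- The set of vertices of the `N^d`-branching tree: finite words over `Fin (N^d)`. -/
abbrev Word (d N : ℕ) : Type := Σ n : ℕ, Fin n → Fin (N ^ d)

/-- The sample space `Ω` of fractal percolation. -/
abbrev Omega (d N : ℕ) : Type := Word d N → Bool

/-- The Bernoulli measure `(1-p)·δ_false + p·δ_true` on `Bool`. -/
def bernoulliMeasure (p : ℝ) : Measure Bool :=
  ENNReal.ofReal (1 - p) • Measure.dirac false + ENNReal.ofReal p • Measure.dirac true

/-- `P` is the percolation measure `ℙ_p = ((1-p)δ_0 + pδ_1)^{V}` on `Ω = {0,1}^V`: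
it is the unique probability measure under which the coordinates are independent and
Bernoulli(`p`)-distributed. -/
def IsPercMeasure (d N : ℕ) (p : ℝ) (P : Measure (Omega d N)) : Prop :=
  IsProbabilityMeasure P ∧
    ProbabilityTheory.iIndepFun
      (fun w : Word d N => fun ω : Omega d N => ω w) P ∧
    ∀ w : Word d N, P.map (fun ω : Omega d N => ω w) = bernoulliMeasure p

/-- The natural base-`N` coding bijection between words of length `n` and grid positions. -/
def coding (d N n : ℕ) : (Fin n → Fin (N ^ d)) ≃ (Fin d → Fin (N ^ n)) :=
  (Equiv.arrowCongr (Equiv.refl (Fin n)) finFunctionFinEquiv.symm).trans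
    ((Equiv.piComm fun (_ : Fin n) (_ : Fin d) => Fin N).trans
      (Equiv.arrowCongr (Equiv.refl (Fin d)) finFunctionFinEquiv))

/-- The grid cube of level `n` at position `l`, an element of `𝒬_n`. -/
def gridCube (d N n : ℕ) (l : Fin d → Fin (N ^ n)) : Set (Euc d) :=
  {x | ∀ i, (l i : ℝ) / (N : ℝ) ^ n ≤ x i ∧ x i ≤ ((l i : ℝ) + 1) / (N : ℝ) ^ n}

/-- The cube of level `n` at position `l` is chosen in the realisation `ω`. -/
def chosen (d N : ℕ) (ω : Omega d N) (n : ℕ) (l : Fin d → Fin (N ^ n)) : Prop :=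
  ω ⟨n, (coding d N n).symm l⟩ = true

/-- The fractal percolation set `E(ω)`. -/
def percSet (d N : ℕ) (ω : Omega d N) : Set (Euc d) :=
  ⋂ n : ℕ, ⋃ l : Fin d → Fin (N ^ n), ⋃ _ : chosen d N ω n l, gridCube d N n l

/-! ### Geometry -/

/-- The orthogonal projection onto the `i`-th coordinate axis. -/
def proj (d : ℕ) (i : Fin d) : Euc d → ℝ := fun x => x i

/-- The line through `x` with direction `v`. -/
def lineThrough (d : ℕ) (x v : Euc d) : Set (Euc d) := {y | ∃ t : ℝ, y = x + t • v}

/-- `ℓ` is a line in `ℝ^d`. -/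
def IsLine (d : ℕ) (ℓ : Set (Euc d)) : Prop := ∃ x v, v ≠ 0 ∧ ℓ = lineThrough d x v

/-- Two parallel lines. -/
def Parallel (d : ℕ) (ℓ ℓ' : Set (Euc d)) : Prop :=
  ∃ x x' v, v ≠ 0 ∧ ℓ = lineThrough d x v ∧ ℓ' = lineThrough d x' v

/-- `i` is a principle direction of the line `ℓ`: it maximises the length of the
projections of subsegments of `ℓ`. -/
def PrincipleDir (d : ℕ) (i : Fin d) (ℓ : Set (Euc d)) : Prop :=
  ∀ x ∈ ℓ, ∀ y ∈ ℓ, ∀ j : Fin d, |y j - x j| ≤ |y i - x i|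

/-- `ℓ` intersects the set `A` properly at level `n`, in direction `i`:
`H¹(Π_i(ℓ ∩ A)) ≥ d⁻¹ N⁻ⁿ`. -/
def ProperlyIn (d N : ℕ) (i : Fin d) (ℓ A : Set (Euc d)) (n : ℕ) : Prop :=
  ENNReal.ofReal ((d : ℝ)⁻¹ * ((N : ℝ) ^ n)⁻¹) ≤ μH[1] (proj d i '' (ℓ ∩ A))

/-- `ℓ` intersects the set `A` properly at level `n`. -/
def Properly (d N : ℕ) (ℓ A : Set (Euc d)) (n : ℕ) : Prop :=
  ∃ i, PrincipleDir d i ℓ ∧ ProperlyIn d N i ℓ A n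

/-- `ℓ` intersects `A` very properly in direction `i` at level `n`:
`Π_i(ℓ ∩ A)` contains an interval `[k d⁻¹N⁻ⁿ, (k+1) d⁻¹N⁻ⁿ]` with `k ∈ ℤ`. -/
def VeryProperly (d N : ℕ) (i : Fin d) (ℓ A : Set (Euc d)) (n : ℕ) : Prop :=
  ∃ k : ℤ, Icc ((k : ℝ) * ((d : ℝ)⁻¹ * ((N : ℝ) ^ n)⁻¹))
      (((k : ℝ) + 1) * ((d : ℝ)⁻¹ * ((N : ℝ) ^ n)⁻¹)) ⊆ proj d i '' (ℓ ∩ A)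

/-- The `(n,i)`-layer `Π_i⁻¹([k N⁻ⁿ, (k+1) N⁻ⁿ])`. -/
def nLayer (d N n : ℕ) (i : Fin d) (k : ℕ) : Set (Euc d) :=
  {x | x i ∈ Icc ((k : ℝ) / (N : ℝ) ^ n) (((k : ℝ) + 1) / (N : ℝ) ^ n)}

/-- The points `x` and `y` lie in different connected components of the complement of the
interior of `L`; this is what it means for a curve (or segment) with endpoints `x`, `y` to
pass through the layer `L`. -/
def PassesThroughPts (d : ℕ) (x y : Euc d) (L : Set (Euc d)) : Prop :=
  x ∈ (interior L)ᶜ ∧ y ∈ (interior L)ᶜ ∧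
    connectedComponentIn (interior L)ᶜ x ≠ connectedComponentIn (interior L)ᶜ y

/-- The segment `L(x,y)` passes through the layer `L`. -/
def SegPassesThrough (d : ℕ) (x y : Euc d) (L : Set (Euc d)) : Prop :=
  PassesThroughPts d x y L

/-- The level-`m` cubes at positions `l`, `l'` are `i`-neighbours: they intersect and lie in
a common `(m,i)`-layer. -/
def INeighbour (d N m : ℕ) (i : Fin d) (l l' : Fin d → Fin (N ^ m)) : Prop :=
  (gridCube d N m l ∩ gridCube d N m l').Nonempty ∧
    ∃ k : ℕ, gridCube d N m l ⊆ nLayer d N m i k ∧ gridCube d N m l' ⊆ nLayer d N m i k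

/-- The level-`m` cube at position `l` is strongly `i`-deleted: no `i`-neighbour of it
(including itself) is chosen. -/
def StronglyIDeleted (d N : ℕ) (ω : Omega d N) (m : ℕ) (i : Fin d)
    (l : Fin d → Fin (N ^ m)) : Prop :=
  ∀ l', INeighbour d N m i l l' → ¬ chosen d N ω m l'

/-- Indices of `(m,i)`-layers meeting `A` in a set of positive length. -/
def posLayers (d N m : ℕ) (i : Fin d) (A : Set (Euc d)) : Set ℕ :=
  {k | 0 < μH[1] (A ∩ nLayer d N m i k)}

/-- `k'` indexes one of the first two or last two `(m,i)`-layers (in the natural order)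
meeting `A` in positive length. -/
def EdgeLayer (d N m : ℕ) (i : Fin d) (A : Set (Euc d)) (k' : ℕ) : Prop :=
  k' ∈ posLayers d N m i A ∧
    (({k ∈ posLayers d N m i A | k < k'}).ncard ≤ 1 ∨
      ({k ∈ posLayers d N m i A | k' < k}).ncard ≤ 1)

/-- The region `A` (a cube of level `n`) is `m₀`-good for the line `ℓ` with principle
direction `i`: there is a strongly `i`-deleted level-`(n+m₀)` cube inside `A`, not contained
in the first two or last two `(n+m₀,i)`-layers meeting `ℓ ∩ A` in positive length,
which `ℓ` intersects properly. -/
def M0GoodForDir (d N : ℕ) (ω : Omega d N) (n m0 : ℕ) (i : Fin d) (ℓ A : Set (Euc d)) : Prop :=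
  ∃ l' : Fin d → Fin (N ^ (n + m0)),
    gridCube d N (n + m0) l' ⊆ A ∧
    StronglyIDeleted d N ω (n + m0) i l' ∧
    (∀ k', EdgeLayer d N (n + m0) i (ℓ ∩ A) k' →
      ¬ gridCube d N (n + m0) l' ⊆ nLayer d N (n + m0) i k') ∧
    Properly d N ℓ (gridCube d N (n + m0) l') (n + m0)

/-- The family `Γ(Q,m₀)` of lines through a vertex `v` of the cube `Q` (with corner `corner`
and side length `side`) and a grid point of spacing `side/N^{m₀}` of a `(d-1)`-face `F` of `Q`
not containing `v`. -/
def cubeGamma (d N : ℕ) (corner : Fin d → ℝ) (side : ℝ) (m0 : ℕ) : Set (Set (Euc d)) :=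
  {ℓ | ∃ (i : Fin d) (ε : Bool) (vs : Fin d → Bool) (g : Fin d → ℝ),
    vs i = !ε ∧
    g i = corner i + (if ε then side else 0) ∧
    (∀ j, j ≠ i → ∃ z : ℕ, z ≤ N ^ m0 ∧ g j = corner j + (z : ℝ) * side / (N : ℝ) ^ m0) ∧
    ℓ = lineThrough d (ptOf d fun j => corner j + (if vs j then side else 0))
      (ptOf d g - ptOf d fun j => corner j + (if vs j then side else 0))}

/-- The region `A` (a possibly shrunk/shifted cube of level `n` with corner `corner`) is
`m₀`-good: it is `m₀`-good for every line which intersects `A` properly and is parallel to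
some line of `Γ(Q,m₀)`. -/
def M0GoodA (d N : ℕ) (ω : Omega d N) (n m0 : ℕ) (corner : Fin d → ℝ) (A : Set (Euc d)) :
    Prop :=
  ∀ (ℓ : Set (Euc d)) (i : Fin d), IsLine d ℓ →
    (∃ ℓ' ∈ cubeGamma d N corner (((N : ℝ) ^ n)⁻¹) m0, Parallel d ℓ ℓ') →
    PrincipleDir d i ℓ → ProperlyIn d N i ℓ A n →
    M0GoodForDir d N ω n m0 i ℓ A

/-- The level-`n` cube at position `l` is `m₀`-good. -/
def M0Good (d N : ℕ) (ω : Omega d N) (n m0 : ℕ) (l : Fin d → Fin (N ^ n)) : Prop :=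
  M0GoodA d N ω n m0 (fun j => (l j : ℝ) / (N : ℝ) ^ n) (gridCube d N n l)

/-- The cube `K_Q`: concentric with `Q`, five times the side length. -/
def KCube (d N n : ℕ) (l : Fin d → Fin (N ^ n)) : Set (Euc d) :=
  {x | ∀ i, ((l i : ℝ) - 2) / (N : ℝ) ^ n ≤ x i ∧ x i ≤ ((l i : ℝ) + 3) / (N : ℝ) ^ n}

/-! ### Shifted grids -/

/-- The set `S = {-1,1}^d ∪ {0}` of shift directions. -/
def Shifts (d : ℕ) : Set (Fin d → ℤ) := {s | ∀ i, s i = 1 ∨ s i = -1} ∪ {0}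

/-- The translation vector `Σ_i s_i N^{-(n+n'+m₀)} e_i`. -/
def shiftVec (d N n nn m0 : ℕ) (s : Fin d → ℤ) : Fin d → ℝ :=
  fun i => (s i : ℝ) * ((N : ℝ) ^ (n + nn + m0))⁻¹

/-- A level-`n` grid cube translated by the vector `t`: an element of a shifted grid. -/
def shiftCube (d N n : ℕ) (t : Fin d → ℝ) (l : Fin d → Fin (N ^ n)) : Set (Euc d) :=
  {x | ∀ i, (l i : ℝ) / (N : ℝ) ^ n + t i ≤ x i ∧ x i ≤ ((l i : ℝ) + 1) / (N : ℝ) ^ n + t i}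

/-- The concentric cube `int_{m₀} Q = (1 - 2N^{-m₀})Q` of a (shifted) level-`n` cube. -/
def intCube (d N n m0 : ℕ) (t : Fin d → ℝ) (l : Fin d → Fin (N ^ n)) : Set (Euc d) :=
  {x | ∀ i, (l i : ℝ) / (N : ℝ) ^ n + t i + ((N : ℝ) ^ (n + m0))⁻¹ ≤ x i ∧
    x i ≤ ((l i : ℝ) + 1) / (N : ℝ) ^ n + t i - ((N : ℝ) ^ (n + m0))⁻¹}

/-- The (shifted) level-`n` cube at position `l`, translated by `t`, is independently
`m₀`-good. -/
def IndepM0Good (d N : ℕ) (ω : Omega d N) (n m0 : ℕ) (t : Fin d → ℝ)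
    (l : Fin d → Fin (N ^ n)) : Prop :=
  M0GoodA d N ω n m0 (fun j => (l j : ℝ) / (N : ℝ) ^ n + t j) (intCube d N n m0 t l)

/-! ### Iterated goodness along a sequence of levels -/

/-- `GoodL d N ω c m0 k L n l` says that the level-`n` cube at position `l` is
`(k, L, c, m₀)`-good, for a strictly decreasing sequence `L` of levels with `L k = 0`. -/
def GoodL (d N : ℕ) (ω : Omega d N) (c m0 : ℕ) :
    (k : ℕ) → (L : ℕ → ℕ) → (n : ℕ) → (Fin d → Fin (N ^ n)) → Prop
  | 0, _, n, l => M0Good d N ω n m0 l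
  | k + 1, L, n, l =>
      ({l' : Fin d → Fin (N ^ (n + L k)) |
        gridCube d N (n + L k) l' ⊆ gridCube d N n l ∧
          ¬ GoodL d N ω c m0 k (fun j => L j - L k) (n + L k) l'}).ncard ≤ c

/-- Independently `(k, L, c, m₀)`-good cubes of the shifted grids (the shift vector `t`
is the common absolute translation of the nested shifted grids). -/
def IndepGoodL (d N : ℕ) (ω : Omega d N) (c m0 : ℕ) :
    (k : ℕ) → (L : ℕ → ℕ) → (n : ℕ) → (t : Fin d → ℝ) → (Fin d → Fin (N ^ n)) → Prop
  | 0, _, n, t, l => IndepM0Good d N ω n m0 t l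
  | k + 1, L, n, t, l =>
      ({l' : Fin d → Fin (N ^ (n + L k)) |
        shiftCube d N (n + L k) t l' ⊆ shiftCube d N n t l ∧
          ¬ IndepGoodL d N ω c m0 k (fun j => L j - L k) (n + L k) t l'}).ncard ≤ c

/-! ### Curves, Hölder conditions, tightness, gaps -/

/-- The maximum metric `d_∞` on `ℝ^d`. -/
def dmax (d : ℕ) (x y : Euc d) : ℝ := ⨆ i, |x i - y i|

/-- The `d_∞`-distance from a point to a set. -/
def dmaxSet (d : ℕ) (x : Euc d) (A : Set (Euc d)) : ℝ := sInf (dmax d x '' A)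

/-- `γ` (as a curve on `I`) is `(α,η,R)`-tight at `t`. -/
def TightAt (d : ℕ) (γ : ℝ → Euc d) (I : Set ℝ) (α η R t : ℝ) : Prop :=
  ∀ r : ℝ, 0 < r → r ≤ R → η * (2 * r) ^ α ≤ Metric.diam (γ '' (Icc (t - r) (t + r) ∩ I))

/-- `γ` has an `ε`-gap of scale `r` at `t` (with respect to `ω`). -/
def GapAtScale (d N : ℕ) (ω : Omega d N) (γ : ℝ → Euc d) (I : Set ℝ) (ε t r : ℝ) : Prop :=
  ∃ ta tb : ℝ, ta ∈ Icc (t - r) (t + r) ∩ I ∧ tb ∈ Icc (t - r) (t + r) ∩ I ∧ ta < tb ∧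
    (∀ u ∈ Ioo ta tb, γ u ∉ percSet d N ω) ∧
    ε * Metric.diam (γ '' (Icc (t - r) (t + r) ∩ I)) ≤ dist (γ ta) (γ tb)

end FracPerc

open FracPerc

/-!
At a scale `r` where `γ` is tight, an `ε`-gap `]ta, tb[` satisfies
`ε η (2r)^α ≤ |γ ta - γ tb| ≤ H (tb - ta)^α`, so it is a parameter interval of length at least
`c · 2r` with `c = (εη/H)^{1/α}`, and it misses `γ⁻¹(E(ω))`. Hence every point of
`A ∩ γ⁻¹(E(ω))` has lower density at most `1 - c < 1` in that set, which is therefore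
Lebesgue-null by the density theorem. An `α`-Hölder map sends `H¹`-null sets to
`H^{1/α}`-null sets, which gives the statement about `γ(A) ∩ E(ω)`.
-/

open Filter Topology Metric

theorem HolderOnWith.of_dist_le {X Y : Type*} [PseudoMetricSpace X] [PseudoMetricSpace Y]
    {C r : ℝ≥0} {f : X → Y} {s : Set X}
    (h : ∀ x ∈ s, ∀ y ∈ s, dist (f x) (f y) ≤ C * dist x y ^ (r : ℝ)) :
    HolderOnWith C r f s := by
  intro x hx y hy
  rw [edist_dist, edist_dist, ENNReal.ofReal_rpow_of_nonneg dist_nonneg r.coe_nonneg,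
    ← ENNReal.ofReal_coe_nnreal, ← ENNReal.ofReal_mul C.coe_nonneg]
  exact ENNReal.ofReal_le_ofReal (h x hx y hy)

theorem HolderOnWith.hausdorffMeasure_image_eq_zero {X Y : Type*} [EMetricSpace X]
    [EMetricSpace Y] [MeasurableSpace X] [BorelSpace X] [MeasurableSpace Y] [BorelSpace Y]
    {C r : ℝ≥0} {f : X → Y} {s : Set X} (h : HolderOnWith C r f s) (hr : 0 < r) {d : ℝ}
    (hd : 0 ≤ d) (hs : μH[r * d] s = 0) : μH[d] (f '' s) = 0 :=
  nonpos_iff_eq_zero.1 <| by simpa [hs] using h.hausdorffMeasure_image_le hr hd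

theorem Besicovitch.measure_eq_zero_of_frequently_measure_inter_closedBall_le {β : Type*}
    [MetricSpace β] [MeasurableSpace β] [BorelSpace β] [SecondCountableTopology β]
    [HasBesicovitchCovering β] (μ : Measure β) [IsLocallyFiniteMeasure μ] {s : Set β}
    (h : ∀ x ∈ s, ∃ κ < 1,
      ∃ᶠ r in 𝓝[>] 0, μ (s ∩ closedBall x r) ≤ κ * μ (closedBall x r)) :
    μ s = 0 := by
  have hdensity := Besicovitch.ae_tendsto_measure_inter_div μ s
  rw [ae_iff] at hdensity
  have hnot : s ⊆ {x | ¬ Tendsto (fun r => μ (s ∩ closedBall x r) / μ (closedBall x r))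
      (𝓝[>] 0) (𝓝 1)} := by
    rintro x hx hlim
    obtain ⟨κ, hκ, hfreq⟩ := h x hx
    obtain ⟨r, hgt, hle⟩ := ((hlim.eventually (lt_mem_nhds hκ)).and_frequently hfreq).exists
    exact (hgt.trans_le (ENNReal.div_le_of_le_mul hle)).false
  rw [← Measure.restrict_apply_self]
  exact measure_mono_null hnot hdensity

theorem rpow_inv_mul_le_of_mul_rpow_le {K H x y α : ℝ} (hα : 0 < α) (hK : 0 ≤ K) (hH : 0 < H)
    (hx : 0 ≤ x) (hy : 0 ≤ y) (h : K * x ^ α ≤ H * y ^ α) : (K / H) ^ α⁻¹ * x ≤ y := by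
  rw [← Real.rpow_le_rpow_iff (by positivity) hy hα, Real.mul_rpow (by positivity) hx,
    Real.rpow_inv_rpow (by positivity) hα.ne', div_mul_eq_mul_div, div_le_iff₀ hH, mul_comm _ H]
  exact h

theorem volume_inter_closedBall_le_of_forall_notMem_Ioo {s : Set ℝ} {x r a b : ℝ}
    (ha : x - r ≤ a) (hab : a ≤ b) (hb : b ≤ x + r) (hs : ∀ u ∈ Ioo a b, u ∉ s) :
    volume (s ∩ closedBall x r) ≤ ENNReal.ofReal (2 * r - (b - a)) := by
  have hsub : s ∩ closedBall x r ⊆ Icc (x - r) (x + r) \ Ioo a b := by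
    rintro u ⟨hus, hu⟩
    exact ⟨Real.closedBall_eq_Icc ▸ hu, fun hu' => hs u hu' hus⟩
  calc volume (s ∩ closedBall x r)
      ≤ volume (Icc (x - r) (x + r) \ Ioo a b) := measure_mono hsub
    _ = ENNReal.ofReal (x + r - (x - r)) - ENNReal.ofReal (b - a) := by
        rw [measure_sdiff (Ioo_subset_Icc_self.trans (Icc_subset_Icc ha hb))
          measurableSet_Ioo.nullMeasurableSet (by simp), Real.volume_Icc, Real.volume_Ioo]
    _ = ENNReal.ofReal (2 * r - (b - a)) := by
        rw [← ENNReal.ofReal_sub _ (by linarith)]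
        ring_nf

namespace FracPerc

variable {d N : ℕ} {ω : Omega d N} {γ : ℝ → Euc d} {I : Set ℝ} {α H η ε R t r : ℝ}

theorem holder_const_pos_of_tightAt (hHol : ∀ t ∈ I, ∀ s ∈ I, dist (γ t) (γ s) ≤ H * |t - s| ^ α)
    (hη : 0 < η) (hR : 0 < R) (hTight : TightAt d γ I α η R t) : 0 < H := by
  by_contra! hH
  have hdiam : Metric.diam (γ '' (Icc (t - R) (t + R) ∩ I)) ≤ 0 := by
    refine Metric.diam_le_of_forall_dist_le le_rfl ?_
    rintro _ ⟨u, hu, rfl⟩ _ ⟨v, hv, rfl⟩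
    exact (hHol u hu.2 v hv.2).trans (mul_nonpos_of_nonpos_of_nonneg hH (by positivity))
  have := hTight R hR le_rfl
  have : 0 < η * (2 * R) ^ α := by positivity
  linarith

theorem exists_gap_interval (hε : 0 ≤ ε)
    (hHol : ∀ t ∈ I, ∀ s ∈ I, dist (γ t) (γ s) ≤ H * |t - s| ^ α)
    (hTight : TightAt d γ I α η R t) (hr : 0 < r) (hrR : r ≤ R)
    (hgap : GapAtScale d N ω γ I ε t r) :
    ∃ ta tb, t - r ≤ ta ∧ ta ≤ tb ∧ tb ≤ t + r ∧ (∀ u ∈ Ioo ta tb, γ u ∉ percSet d N ω) ∧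
      ε * η * (2 * r) ^ α ≤ H * (tb - ta) ^ α := by
  obtain ⟨ta, tb, hta, htb, htab, hout, hdist⟩ := hgap
  refine ⟨ta, tb, hta.1.1, htab.le, htb.1.2, hout, ?_⟩
  calc ε * η * (2 * r) ^ α
      ≤ ε * Metric.diam (γ '' (Icc (t - r) (t + r) ∩ I)) := by
        rw [mul_assoc]; exact mul_le_mul_of_nonneg_left (hTight r hr hrR) hε
    _ ≤ dist (γ ta) (γ tb) := hdist
    _ ≤ H * (tb - ta) ^ α := by
        simpa [abs_of_neg (sub_neg.2 htab)] using hHol ta hta.2 tb htb.2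

theorem exists_frequently_volume_inter_closedBall_le (hα : 0 < α) (hη : 0 < η) (hε : 0 < ε)
    (hHol : ∀ t ∈ I, ∀ s ∈ I, dist (γ t) (γ s) ≤ H * |t - s| ^ α) (hR : 0 < R)
    (hTight : TightAt d γ I α η R t) (hgaps : ∃ᶠ r in 𝓝[>] 0, GapAtScale d N ω γ I ε t r)
    {S : Set ℝ} (hS : S ⊆ γ ⁻¹' percSet d N ω) :
    ∃ κ < 1, ∃ᶠ r in 𝓝[>] 0, volume (S ∩ closedBall t r) ≤ κ * volume (closedBall t r) := by
  have hH := holder_const_pos_of_tightAt hHol hη hR hTight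
  set c := (ε * η / H) ^ α⁻¹
  have hc : 0 < c := by positivity
  refine ⟨ENNReal.ofReal (1 - c), ENNReal.ofReal_lt_one.2 (by linarith), ?_⟩
  have hsmall : ∀ᶠ r in 𝓝[>] (0 : ℝ), r ∈ Ioc 0 R := Ioc_mem_nhdsGT hR
  refine (hgaps.and_eventually hsmall).mono ?_
  rintro r ⟨hgap, hr, hrR⟩
  obtain ⟨ta, tb, hta, htab, htb, hout, hlen⟩ :=
    exists_gap_interval hε.le hHol hTight hr hrR hgap
  have hc_le : c * (2 * r) ≤ tb - ta :=
    rpow_inv_mul_le_of_mul_rpow_le hα (by positivity) hH (by positivity) (by linarith) hlen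
  calc volume (S ∩ closedBall t r)
      ≤ ENNReal.ofReal (2 * r - (tb - ta)) :=
        volume_inter_closedBall_le_of_forall_notMem_Ioo hta htab htb
          fun u hu huS => hout u hu (hS huS)
    _ ≤ ENNReal.ofReal ((1 - c) * (2 * r)) := ENNReal.ofReal_le_ofReal (by linarith)
    _ = ENNReal.ofReal (1 - c) * volume (closedBall t r) := by
        rw [Real.volume_closedBall, ENNReal.ofReal_mul' (by linarith)]

end FracPerc

theorem small_gaps_general
    (d N : ℕ) (ω : Omega d N)
    (α H η ε : ℝ) (hα0 : 0 < α) (hη : 0 < η) (hε : 0 < ε)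
    (a b : ℝ) (γ : ℝ → Euc d)
    (hHol : ∀ t ∈ Icc a b, ∀ s ∈ Icc a b, dist (γ t) (γ s) ≤ H * |t - s| ^ α)
    (hTight : ∀ t ∈ Icc a b, ∃ R : ℝ, 0 < R ∧ TightAt d γ (Icc a b) α η R t) :
    μH[1] ({t ∈ Icc a b | ∀ δ : ℝ, 0 < δ → ∃ r : ℝ, 0 < r ∧ r < δ ∧
        GapAtScale d N ω γ (Icc a b) ε t r} ∩ γ ⁻¹' percSet d N ω) = 0 ∧
      μH[1/α] (γ '' {t ∈ Icc a b | ∀ δ : ℝ, 0 < δ → ∃ r : ℝ, 0 < r ∧ r < δ ∧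
        GapAtScale d N ω γ (Icc a b) ε t r} ∩ percSet d N ω) = 0 := by
  set A := {t ∈ Icc a b | ∀ δ : ℝ, 0 < δ → ∃ r : ℝ, 0 < r ∧ r < δ ∧
    GapAtScale d N ω γ (Icc a b) ε t r}
  have hB : μH[1] (A ∩ γ ⁻¹' percSet d N ω) = 0 := by
    rw [hausdorffMeasure_real]
    refine Besicovitch.measure_eq_zero_of_frequently_measure_inter_closedBall_le volume
      fun t ht => ?_
    obtain ⟨R, hR, hTightR⟩ := hTight t ht.1.1
    have hgaps : ∃ᶠ r in 𝓝[>] 0, GapAtScale d N ω γ (Icc a b) ε t r :=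
      (nhdsGT_basis 0).frequently_iff.2 fun δ hδ =>
        let ⟨r, hr, hrδ, hgap⟩ := ht.1.2 δ hδ
        ⟨r, ⟨hr, hrδ⟩, hgap⟩
    exact exists_frequently_volume_inter_closedBall_le hα0 hη hε hHol hR hTightR hgaps
      inter_subset_right
  refine ⟨hB, measure_mono_null (image_inter_preimage γ A _).symm.subset ?_⟩
  have hHolder : HolderOnWith H.toNNReal α.toNNReal γ (Icc a b) :=
    HolderOnWith.of_dist_le fun t ht s hs => (hHol t ht s hs).trans <| by
      rw [Real.coe_toNNReal α hα0.le, Real.dist_eq]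
      exact mul_le_mul_of_nonneg_right (Real.le_coe_toNNReal H) (by positivity)
  refine (hHolder.mono fun t ht => ht.1.1).hausdorffMeasure_image_eq_zero
    (Real.toNNReal_pos.2 hα0) (by positivity) ?_
  rwa [Real.coe_toNNReal α hα0.le, mul_one_div_cancel hα0.ne']

/-- Around `H¹`-almost every point of a tight Hölder curve lying in
`E(ω)` there are no `ε`-gaps of arbitrarily small scales. -/
theorem small_gaps
    (d N : ℕ) (hd : 2 ≤ d) (hN : 2 ≤ N) (ω : Omega d N)
    (α H η ε : ℝ) (hα0 : 0 < α) (hα1 : α ≤ 1) (hH : 0 ≤ H) (hη : 0 < η) (hε : 0 < ε)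
    (a b : ℝ) (hab : a ≤ b) (γ : ℝ → Euc d)
    (hHol : ∀ t ∈ Icc a b, ∀ s ∈ Icc a b, dist (γ t) (γ s) ≤ H * |t - s| ^ α)
    (hTight : ∀ t ∈ Icc a b, ∃ R : ℝ, 0 < R ∧ TightAt d γ (Icc a b) α η R t) :
    μH[1] ({t ∈ Icc a b | ∀ δ : ℝ, 0 < δ → ∃ r : ℝ, 0 < r ∧ r < δ ∧
        GapAtScale d N ω γ (Icc a b) ε t r} ∩ γ ⁻¹' percSet d N ω) = 0 ∧
      μH[1/α] (γ '' {t ∈ Icc a b | ∀ δ : ℝ, 0 < δ → ∃ r : ℝ, 0 < r ∧ r < δ ∧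
        GapAtScale d N ω γ (Icc a b) ε t r} ∩ percSet d N ω) = 0 :=
  small_gaps_general d N ω α H η ε hα0 hη hε a b γ hHol hTight
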